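/- arXiv:1609.01969 — 2 statements merged into one kernel-verified Lean document; each statement's English description precedes it below -/
import Mathlib

section
/- Let A be a group acting by automorphisms on the finite group G and let K and L be distinct (A,sol)-components of G. Then K and L normalize each other and [K,L] ≤ Sol(K) ∩ Sol(L). -/
/-!
Modulo `Sol(G)` a sol-component `E` becomes a component, and `E` is recovered from its image:
a perfect subgroup of `E * Sol(G)` already lies in `E`, because along a subnormal chain from `E`
to `G` each step, cut down to `E * Sol(G)`, has solvable quotient. So distinct sol-components
have distinct images, which are distinct components of `G / Sol(G)` and therefore commute.
Hence the images of `K` and `L` commute, i.e. `[K, L] ≤ Sol(G)`. An element of `K` centralizes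
the image of each generating sol-component `F` of `L`, so it conjugates `F` to a sol-component
with the same image, that is, to `F` itself: `K` normalizes `L`, and symmetrically. Therefore
`[K, L] ≤ K ∩ L ∩ Sol(G)`, which lies in `Sol(K) ∩ Sol(L)`.
-/

open Pointwise

/-- A subgroup `H` of `G` is *subnormal* if there is a finite chain
`H = c 0 ⊴ c 1 ⊴ ⋯ ⊴ c n = G` with each term normal in the next. -/
def IsSubnormal {G : Type*} [Group G] (H : Subgroup G) : Prop :=
  ∃ (n : ℕ) (c : ℕ → Subgroup G), c 0 = H ∧ c n = ⊤ ∧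
    ∀ i < n, c i ≤ c (i + 1) ∧ ((c i).subgroupOf (c (i + 1))).Normal

/-- A group is *quasisimple* if it is perfect and its quotient by its center is simple. -/
def IsQuasisimpleGroup (Q : Type*) [Group Q] : Prop :=
  commutator Q = ⊤ ∧ IsSimpleGroup (Q ⧸ Subgroup.center Q)

/-- A *component* of `G` is a quasisimple subnormal subgroup. -/
def IsComponent {G : Type*} [Group G] (K : Subgroup G) : Prop :=
  IsSubnormal K ∧ IsQuasisimpleGroup ↥K

/-- The *layer* `E(G)`: the subgroup generated by all components of `G`. -/
def layer (G : Type*) [Group G] : Subgroup G :=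
  sSup {K : Subgroup G | IsComponent K}

/-- `Sol(G)`: the join of all solvable normal subgroups of `G`. -/
def solRadical (G : Type*) [Group G] : Subgroup G :=
  sSup {N : Subgroup G | N.Normal ∧ IsSolvable ↥N}

instance solRadical_normal (G : Type*) [Group G] : (solRadical G).Normal := by
  constructor
  intro n hn g
  have h : solRadical G ≤ (solRadical G).comap (MulAut.conj g).toMonoidHom := by
    apply sSup_le
    intro N hN x hx
    have hmem : g * x * g⁻¹ ∈ N := hN.1.conj_mem x hx g
    exact Subgroup.mem_comap.mpr
      (le_sSup hN (by simpa [MulAut.conj_apply] using hmem))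
  simpa [MulAut.conj_apply] using h hn

/-- A *sol-component* of `G` is a perfect subnormal subgroup of `G` whose image in
`G/Sol(G)` is a component of `G/Sol(G)`. -/
def IsSolComponent {G : Type*} [Group G] (K : Subgroup G) : Prop :=
  IsSubnormal K ∧ commutator ↥K = ⊤ ∧
    IsComponent (K.map (QuotientGroup.mk' (solRadical G)))

/-- `E_sol(G)`: the subgroup generated by all sol-components of `G`. -/
def solLayer (G : Type*) [Group G] : Subgroup G :=
  sSup {K : Subgroup G | IsSolComponent K}

/-- `G` is *`A`-simple* (with `A` acting via `φ : A →* MulAut G`) if `G` is nonabelian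
and the only `A`-invariant normal subgroups of `G` are `1` and `G`. -/
def IsMulASimple {A G : Type*} [Group A] [Group G] (φ : A →* MulAut G) : Prop :=
  (¬ ∀ x y : G, Commute x y) ∧
    ∀ N : Subgroup G, N.Normal → (∀ a : A, φ a • N = N) → N = ⊥ ∨ N = ⊤

/-- The homomorphism `MulAut G →* MulAut (G ⧸ Z(G))` induced by passing to the
quotient by the center (which is characteristic). -/
def centerQuotHom (G : Type*) [Group G] :
    MulAut G →* MulAut (G ⧸ Subgroup.center G) where
  toFun e := QuotientGroup.congr (Subgroup.center G) (Subgroup.center G) e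
      (Subgroup.characteristic_iff_map_eq.mp inferInstance e)
  map_one' := by
    ext x
    induction x using QuotientGroup.induction_on with
    | H x => rfl
  map_mul' e f := by
    ext x
    induction x using QuotientGroup.induction_on with
    | H x => rfl

/-- `G` is *`A`-quasisimple* (with `A` acting via `φ`) if `G` is perfect and
`G/Z(G)` is `A`-simple with respect to the induced action. -/
def IsAQuasisimple {A G : Type*} [Group A] [Group G] (φ : A →* MulAut G) : Prop :=
  commutator G = ⊤ ∧ IsMulASimple ((centerQuotHom G).comp φ)

theorem iSup_smul_eq_of_smul_eq {A M X : Type*} [Group A] [Monoid M] [MulAction M X]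
    [CompleteLattice X] (φ : A →* M) {x y : X} {a b : A} (h : φ a • x = φ b • y) :
    ⨆ c, φ c • x = ⨆ c, φ c • y := by
  have key : ∀ (z : X) (d : A), ⨆ c, φ c • φ d • z = ⨆ c, φ c • z := fun z d => by
    simp_rw [smul_smul, ← map_mul]
    exact (Equiv.mulRight d).iSup_comp (g := fun c => φ c • z)
  rw [← key x a, h, key]

theorem Subgroup.commutator_iSup_iSup_eq_bot {G : Type*} [Group G] {ι κ : Sort*}
    {H : ι → Subgroup G} {K : κ → Subgroup G} (h : ∀ i j, ⁅H i, K j⁆ = ⊥) :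
    ⁅⨆ i, H i, ⨆ j, K j⁆ = ⊥ := by
  rw [commutator_eq_bot_iff_le_centralizer]
  refine iSup_le fun i => Subgroup.le_centralizer_iff.mp (iSup_le fun j => ?_)
  exact Subgroup.le_centralizer_iff.mp (commutator_eq_bot_iff_le_centralizer.mp (h i j))

/-- `SubnormalIn H M`: there is a chain `H = H₀ ⊴ H₁ ⊴ ⋯ ⊴ Hₖ = M`. Unlike
`Subgroup.IsSubnormal`, the chain is extended at the top, which is the end the inductions below
work on. -/
inductive SubnormalIn {G : Type*} [Group G] : Subgroup G → Subgroup G → Prop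
  | refl (H : Subgroup G) : SubnormalIn H H
  | of_le_normalizer {H K M : Subgroup G} :
      SubnormalIn H K → K ≤ M → M ≤ Subgroup.normalizer (K : Set G) → SubnormalIn H M

namespace SubnormalIn

open Subgroup

variable {G : Type*} [Group G] {H K L M N : Subgroup G}

theorem le (h : SubnormalIn H M) : H ≤ M := by
  induction h with
  | refl => exact le_rfl
  | of_le_normalizer _ hKM _ ih => exact ih.trans hKM

theorem inf_right (h : SubnormalIn H M) (X : Subgroup G) : SubnormalIn (H ⊓ X) (M ⊓ X) := by
  induction h with
  | refl => exact refl _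
  | of_le_normalizer _ hKM hMK ih =>
    refine of_le_normalizer ih (inf_le_inf_right X hKM) ?_
    exact (le_inf (inf_le_left.trans hMK) (inf_le_right.trans le_normalizer)).trans
      inf_normalizer_le_normalizer_inf

end SubnormalIn

theorem IsSubnormal.subnormalIn_top {G : Type*} [Group G] {H : Subgroup G} (h : IsSubnormal H) :
    SubnormalIn H ⊤ := by
  obtain ⟨n, c, h0, hn, hc⟩ := h
  have key : ∀ i ≤ n, SubnormalIn H (c i) := by
    intro i hi
    induction i with
    | zero => exact h0 ▸ .refl H
    | succ i ih =>
      obtain ⟨hle, hnormal⟩ := hc i (by omega)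
      exact .of_le_normalizer (ih (by omega)) hle
        ((Subgroup.normal_subgroupOf_iff_le_normalizer hle).mp hnormal)
  exact hn ▸ key n le_rfl

theorem IsSubnormal.map {G G' : Type*} [Group G] [Group G'] {H : Subgroup G} {f : G →* G'}
    (hf : Function.Surjective f) (h : IsSubnormal H) : IsSubnormal (H.map f) := by
  obtain ⟨n, c, h0, hn, hc⟩ := h
  refine ⟨n, fun i => (c i).map f, congrArg _ h0,
    (congrArg _ hn).trans (Subgroup.map_top_of_surjective f hf), fun i hi => ?_⟩
  obtain ⟨hle, hnormal⟩ := hc i hi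
  refine ⟨Subgroup.map_mono hle, (Subgroup.normal_subgroupOf_iff_le_normalizer
    (Subgroup.map_mono hle)).mpr ?_⟩
  exact (Subgroup.map_mono ((Subgroup.normal_subgroupOf_iff_le_normalizer hle).mp hnormal)).trans
    (Subgroup.le_normalizer_map f)

namespace IsQuasisimpleGroup

open Subgroup

variable {Q : Type*} [Group Q]

theorem isPerfect (h : IsQuasisimpleGroup Q) : Group.IsPerfect Q :=
  Group.isPerfect_def.mpr h.1

theorem nontrivial (h : IsQuasisimpleGroup Q) : Nontrivial Q :=
  have := h.2.toNontrivial
  (QuotientGroup.mk'_surjective (center Q)).nontrivial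

theorem eq_top_or_le_center (h : IsQuasisimpleGroup Q) (N : Subgroup Q) [hN : N.Normal] :
    N = ⊤ ∨ N ≤ center Q := by
  have := h.2
  have hmap := hN.map _ (QuotientGroup.mk'_surjective (center Q))
  refine (hmap.eq_bot_or_eq_top).symm.imp (fun htop => ?_) (fun hbot => ?_)
  · have hsup : N ⊔ center Q = ⊤ := by
      rw [eq_top_iff, ← QuotientGroup.ker_mk' (center Q), ← Subgroup.map_le_map_iff, htop]
      exact le_top
    exact top_le_iff.mp (h.1 ▸ hN.commutator_le_of_self_sup_commutative_eq_top hsup inferInstance)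
  · rwa [Subgroup.map_eq_bot_iff, QuotientGroup.ker_mk'] at hbot

theorem of_mulEquiv {Q' : Type*} [Group Q'] (e : Q ≃* Q') (h : IsQuasisimpleGroup Q) :
    IsQuasisimpleGroup Q' := by
  have hcenter : (center Q).map e.toMonoidHom = center Q' := by
    ext x
    rw [mem_map_equiv, ← SetLike.mem_coe, coe_center, ← SetLike.mem_coe, coe_center,
      ← MulEquivClass.apply_mem_center_iff e, e.apply_symm_apply]
  have := h.isPerfect
  have := h.2
  refine ⟨Group.isPerfect_def.mp (Group.IsPerfect.ofSurjective (f := e.toMonoidHom)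
    e.surjective), ?_⟩
  exact (QuotientGroup.congr _ _ e hcenter).symm.isSimpleGroup

end IsQuasisimpleGroup

namespace Subgroup

variable {G : Type*} [Group G] {K N : Subgroup G}

theorem le_or_commutator_eq_bot_of_isQuasisimpleGroup (hK : IsQuasisimpleGroup K) (hNK : N ≤ K)
    (hKN : K ≤ normalizer (N : Set G)) : K ≤ N ∨ ⁅K, N⁆ = ⊥ := by
  have := (normal_subgroupOf_iff_le_normalizer hNK).mpr hKN
  refine (hK.eq_top_or_le_center (N.subgroupOf K)).imp subgroupOf_eq_top.mp fun hcen => ?_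
  have := map_commutator ⊤ (N.subgroupOf K) K.subtype
  rwa [commutator_top_left_eq_bot_iff_le_center.mpr hcen, map_bot, ← MonoidHom.range_eq_map,
    range_subtype, subgroupOf_map_subtype, inf_eq_left.mpr hNK, eq_comm] at this

end Subgroup

namespace SubnormalIn

open Subgroup

variable {G : Type*} [Group G] {H K L M N : Subgroup G}

theorem le_or_commutator_eq_bot (h : SubnormalIn K M) (hK : IsQuasisimpleGroup K) (hNM : N ≤ M)
    (hMN : M ≤ normalizer (N : Set G)) : K ≤ N ∨ ⁅K, N⁆ = ⊥ := by
  induction h generalizing N with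
  | refl => exact le_or_commutator_eq_bot_of_isQuasisimpleGroup hK hNM hMN
  | @of_le_normalizer M' M hKM' hM'M hMM' ih =>
    have hN' : M' ≤ normalizer ((N ⊓ M' : Subgroup G) : Set G) :=
      (le_inf (hM'M.trans hMN) le_normalizer).trans inf_normalizer_le_normalizer_inf
    refine (ih inf_le_right hN').imp (fun hle => hle.trans inf_le_left) fun hbot => ?_
    have hKM := hKM'.le.trans hM'M
    have hsub : ⁅K, N⁆ ≤ N ⊓ M' :=
      le_inf (le_normalizer_iff_commutator_le_right.mp (hKM.trans hMN))
        ((commutator_mono hKM'.le hNM).trans (le_normalizer_iff_commutator_le_left.mp hMM'))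
    have h1 : ⁅⁅K, N⁆, K⁆ = ⊥ :=
      le_bot_iff.mp ((commutator_mono hsub le_rfl).trans (commutator_comm (N ⊓ M') K ▸ hbot.le))
    have h2 : ⁅⁅N, K⁆, K⁆ = ⊥ := commutator_comm N K ▸ h1
    have := commutator_commutator_eq_bot_of_rotate h1 h2
    rwa [isPerfect_iff.mp hK.isPerfect] at this

theorem eq_bot_or_eq_of_isPerfect (h : SubnormalIn H M) (hH : Group.IsPerfect H)
    (hM : IsQuasisimpleGroup M) : H = ⊥ ∨ H = M := by
  induction h with
  | refl => exact Or.inr rfl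
  | @of_le_normalizer M' M hHM' hM'M hMM' ih =>
    rcases le_or_commutator_eq_bot_of_isQuasisimpleGroup hM hM'M hMM' with hle | hbot
    · obtain rfl := le_antisymm hM'M hle
      exact ih hM
    · left
      rw [← isPerfect_iff.mp hH]
      exact le_bot_iff.mp ((commutator_mono (hHM'.le.trans hM'M) hHM'.le).trans hbot.le)

theorem commutator_eq_bot_of_ne (hK : SubnormalIn K M) (hL : SubnormalIn L M)
    (hKq : IsQuasisimpleGroup K) (hLq : IsQuasisimpleGroup L) (hne : K ≠ L) :
    ⁅K, L⁆ = ⊥ := by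
  induction hK generalizing L with
  | refl =>
    have hL_ne_bot : L ≠ ⊥ := (nontrivial_iff_ne_bot L).mp hLq.nontrivial
    exact (hne ((hL.eq_bot_or_eq_of_isPerfect hLq.isPerfect hKq).resolve_left hL_ne_bot).symm).elim
  | @of_le_normalizer M' M hKM' hM'M hMM' ih =>
    rcases hL.le_or_commutator_eq_bot hLq hM'M hMM' with hle | hbot
    · have hLM' := hL.inf_right M'
      rw [inf_eq_left.mpr hle, inf_eq_right.mpr hM'M] at hLM'
      exact ih hLM' hLq hne
    · rw [commutator_comm]
      exact le_bot_iff.mp ((commutator_mono le_rfl hKM'.le).trans hbot.le)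

end SubnormalIn

section SolvableRadical

open Subgroup Group

variable {G : Type*} [Group G]

theorem isSolvable_sup_of_normal (N₁ N₂ : Subgroup G) [N₁.Normal] [Group.IsSolvable N₁]
    [Group.IsSolvable N₂] : Group.IsSolvable ↥(N₁ ⊔ N₂) := by
  set π := QuotientGroup.mk' N₁
  have hmap : (N₁ ⊔ N₂).map π = N₂.map π := by
    rw [Subgroup.map_sup, (Subgroup.map_eq_bot_iff _).mpr (QuotientGroup.ker_mk' N₁).ge,
      bot_sup_eq]
  have : Group.IsSolvable ↥(N₂.map π) :=
    isSolvable_of_surjective (π.subgroupMap_surjective N₂)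
  let g : ↥(N₁ ⊔ N₂) →* ↥(N₂.map π) :=
    (π.comp (N₁ ⊔ N₂).subtype).codRestrict _ fun x => hmap ▸ mem_map_of_mem π x.2
  refine isSolvable_of_ker_le_range (inclusion le_sup_left) g fun x hx => ?_
  exact ⟨⟨x, (QuotientGroup.eq_one_iff _).mp (congrArg Subtype.val hx)⟩, rfl⟩

instance isSolvable_solRadical [Finite G] : Group.IsSolvable (solRadical G) := by
  have hclosed : SupClosed {N : Subgroup G | N.Normal ∧ Group.IsSolvable N} := by
    rintro N₁ ⟨hN₁, hs₁⟩ N₂ ⟨hN₂, hs₂⟩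
    exact ⟨sup_normal N₁ N₂, isSolvable_sup_of_normal N₁ N₂⟩
  exact (hclosed.sSup_mem (Set.toFinite _) ⟨normal_bot, inferInstance⟩ le_rfl).2

instance solRadical_characteristic : (solRadical G).Characteristic := by
  refine characteristic_iff_map_le.mpr fun ϕ => map_le_iff_le_comap.mpr (sSup_le ?_)
  rintro N ⟨hN, hs⟩
  rw [← map_le_iff_le_comap]
  have : Group.IsSolvable N := hs
  have : Group.IsSolvable ↥(N.map ϕ.toMonoidHom) :=
    isSolvable_of_surjective (ϕ.toMonoidHom.subgroupMap_surjective N)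
  exact le_sSup ⟨hN.map _ ϕ.surjective, this⟩

theorem inf_le_map_solRadical {N : Subgroup G} [N.Normal] [Group.IsSolvable N] (M : Subgroup G) :
    N ⊓ M ≤ (solRadical M).map M.subtype := by
  rw [← subgroupOf_map_subtype]
  refine map_mono (le_sSup ⟨inferInstance, ?_⟩)
  refine isSolvable_of_isSolvable_injective (f := M.subtype.subgroupComap N) fun x y hxy => ?_
  exact Subtype.ext (Subtype.ext (congrArg Subtype.val hxy :))

end SolvableRadical

section SolComponent

open Subgroup Group

variable {G : Type*} [Group G]

local notation "π" => QuotientGroup.mk' (solRadical G)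

theorem Subgroup.le_of_isPerfect_of_le_sup {X M P S : Subgroup G} [S.Normal] [Group.IsSolvable S]
    (hP : Group.IsPerfect P) (hXM : X ≤ M) (hMX : M ≤ normalizer (X : Set G)) (hPM : P ≤ M)
    (hPS : P ≤ X ⊔ S) : P ≤ X := by
  have := (normal_subgroupOf_iff_le_normalizer hXM).mpr hMX
  set q := QuotientGroup.mk' (X.subgroupOf M)
  let f := q.comp (inclusion hPM)
  let g := q.comp (inclusion (inf_le_right : S ⊓ M ≤ M))
  -- the image of `P` in `M ⧸ X` lies in that of the solvable group `S ⊓ M`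
  have hfg : f.range ≤ g.range := by
    rintro _ ⟨p, rfl⟩
    obtain ⟨x, hx, s, hs, hxs⟩ : (p : G) ∈ (X : Set G) * S := mul_normal X S ▸ hPS p.2
    have hsM : s ∈ M :=
      eq_inv_mul_of_mul_eq hxs ▸ mul_mem (inv_mem (hXM hx)) (hPM p.2)
    refine ⟨⟨s, hs, hsM⟩, ?_⟩
    have hx1 : q ⟨x, hXM hx⟩ = 1 := (QuotientGroup.eq_one_iff _).mpr hx
    change q ⟨s, hsM⟩ = q ⟨p, hPM p.2⟩
    rw [← one_mul (q ⟨s, hsM⟩), ← hx1, ← map_mul]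
    exact congrArg q (Subtype.ext hxs)
  have : Group.IsSolvable ↥(S ⊓ M) :=
    isSolvable_of_isSolvable_injective (inclusion_injective inf_le_left)
  have : Group.IsSolvable g.range := isSolvable_of_surjective g.rangeRestrict_surjective
  have hsolv : Group.IsSolvable f.range :=
    isSolvable_of_isSolvable_injective (inclusion_injective hfg)
  have hperf : Group.IsPerfect f.range := Group.IsPerfect.range f
  have hbot : f.range = ⊥ := by
    by_contra hne
    have := (nontrivial_iff_ne_bot _).mpr hne
    exact Group.IsPerfect.not_isSolvable _ hsolv
  intro p hp
  have hp1 : f ⟨p, hp⟩ = 1 := (MonoidHom.range_eq_bot_iff.mp hbot) ▸ rfl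
  exact (QuotientGroup.eq_one_iff (inclusion hPM ⟨p, hp⟩)).mp hp1

theorem SubnormalIn.le_of_isPerfect_of_le_sup {E M P S : Subgroup G} [S.Normal]
    [Group.IsSolvable S] (hE : SubnormalIn E M) (hP : Group.IsPerfect P) (hPM : P ≤ M)
    (hPS : P ≤ E ⊔ S) : P ≤ E := by
  induction hE with
  | refl => exact hPM
  | @of_le_normalizer M' M hEM' hM'M hMM' ih =>
    exact ih (Subgroup.le_of_isPerfect_of_le_sup hP hM'M hMM' hPM
      (hPS.trans (sup_le_sup_right hEM'.le S)))

theorem IsComponent.map_mulEquiv {G' : Type*} [Group G'] {K : Subgroup G} (h : IsComponent K)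
    (e : G ≃* G') : IsComponent (K.map (e : G →* G')) :=
  ⟨h.1.map e.surjective, h.2.of_mulEquiv (K.equivMapOfInjective _ e.injective)⟩

namespace IsSolComponent

variable {E F : Subgroup G}

theorem isPerfect (h : IsSolComponent E) : Group.IsPerfect E :=
  Group.isPerfect_def.mpr h.2.1

theorem map_mulEquiv (h : IsSolComponent E) (e : G ≃* G) :
    IsSolComponent (E.map (e : G →* G)) := by
  have hS : (solRadical G).map (e : G →* G) = solRadical G :=
    characteristic_iff_map_eq.mp inferInstance e
  let ψ := QuotientGroup.congr _ _ e hS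
  have hψ : (E.map (e : G →* G)).map π = (E.map π).map (ψ : _ →* _) := by
    rw [map_map, map_map]
    rfl
  have := h.isPerfect
  refine ⟨h.1.map e.surjective, Group.isPerfect_def.mp (Group.IsPerfect.map _), ?_⟩
  rw [hψ]
  exact h.2.2.map_mulEquiv ψ

theorem eq_of_map_eq [Finite G] (hE : IsSolComponent E) (hF : IsSolComponent F)
    (h : E.map π = F.map π) : E = F := by
  have key : ∀ {E F : Subgroup G}, IsSolComponent E → IsSolComponent F →
      E.map π ≤ F.map π → E ≤ F := fun hE hF h =>
    hF.1.subnormalIn_top.le_of_isPerfect_of_le_sup hE.isPerfect le_top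
      (by rwa [Subgroup.map_le_map_iff, QuotientGroup.ker_mk'] at h)
  exact le_antisymm (key hE hF h.le) (key hF hE h.ge)

theorem commutator_map_eq_bot_of_ne [Finite G] (hE : IsSolComponent E) (hF : IsSolComponent F)
    (hne : E ≠ F) : ⁅E.map π, F.map π⁆ = ⊥ :=
  hE.2.2.1.subnormalIn_top.commutator_eq_bot_of_ne hF.2.2.1.subnormalIn_top hE.2.2.2 hF.2.2.2
    fun h => hne (eq_of_map_eq hE hF h)

theorem le_normalizer_of_map_le_normalizer [Finite G] (hE : IsSolComponent E) {X : Subgroup G}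
    (hX : X.map π ≤ normalizer (E.map π : Set (G ⧸ solRadical G))) :
    X ≤ normalizer (E : Set G) := by
  intro x hx
  have hπx := hX (mem_map_of_mem π hx)
  rw [mem_normalizer_iff_map_conj_eq] at hπx ⊢
  refine eq_of_map_eq (hE.map_mulEquiv (MulAut.conj x)) hE ?_
  rw [map_map, ← hπx, map_map]
  rfl

end IsSolComponent

theorem le_normalizer_iSup_of_isSolComponent [Finite G] {ι : Sort*} {F : ι → Subgroup G}
    (hF : ∀ i, IsSolComponent (F i)) {X : Subgroup G}
    (hX : ⁅X.map π, (⨆ i, F i).map π⁆ = ⊥) :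
    X ≤ normalizer ((⨆ i, F i : Subgroup G) : Set G) := by
  refine (le_iInf fun i => (hF i).le_normalizer_of_map_le_normalizer ?_).trans
    (iInf_normalizer_le_normalizer_iSup F)
  exact (commutator_eq_bot_iff_le_centralizer.mp hX).trans
    ((centralizer_le (map_mono (le_iSup F i))).trans (centralizer_le_normalizer _))

end SolComponent

/-- Distinct `(A,sol)`-components `K`, `L` of `G` (subgroups
generated by `A`-orbits of sol-components of `G`) normalize each other and
`[K,L] ≤ Sol(K) ∩ Sol(L)`. -/
theorem distinct_aSolComponents_normalize_and_commutator_le_solRadicals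
    {A G : Type*} [Group A] [Group G] [Finite G] (φ : A →* MulAut G) (K L : Subgroup G)
    (hK : ∃ C : Subgroup G, IsSolComponent C ∧ K = ⨆ a : A, φ a • C)
    (hL : ∃ C : Subgroup G, IsSolComponent C ∧ L = ⨆ a : A, φ a • C)
    (hne : K ≠ L) :
    K ≤ Subgroup.normalizer (L : Set G) ∧ L ≤ Subgroup.normalizer (K : Set G) ∧
      ⁅K, L⁆ ≤ (solRadical ↥K).map K.subtype ⊓ (solRadical ↥L).map L.subtype := by
  obtain ⟨C, hC, rfl⟩ := hK
  obtain ⟨D, hD, rfl⟩ := hL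
  set π := QuotientGroup.mk' (solRadical G)
  have hC' (a : A) : IsSolComponent (φ a • C) := hC.map_mulEquiv (φ a)
  have hD' (b : A) : IsSolComponent (φ b • D) := hD.map_mulEquiv (φ b)
  have hπ : ⁅(⨆ a, φ a • C).map π, (⨆ b, φ b • D).map π⁆ = ⊥ := by
    rw [Subgroup.map_iSup, Subgroup.map_iSup]
    exact Subgroup.commutator_iSup_iSup_eq_bot fun a b =>
      (hC' a).commutator_map_eq_bot_of_ne (hD' b) fun h => hne (iSup_smul_eq_of_smul_eq φ h)
  have hKL := le_normalizer_iSup_of_isSolComponent hD' hπ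
  have hLK := le_normalizer_iSup_of_isSolComponent hC' (by rwa [Subgroup.commutator_comm] at hπ)
  have hS : ⁅⨆ a, φ a • C, ⨆ b, φ b • D⁆ ≤ solRadical G := by
    rwa [← QuotientGroup.ker_mk' (solRadical G), ← Subgroup.map_eq_bot_iff,
      Subgroup.map_commutator]
  exact ⟨hKL, hLK, le_inf
    ((le_inf hS (Subgroup.le_normalizer_iff_commutator_le_left.mp hLK)).trans
      (inf_le_map_solRadical _))
    ((le_inf hS (Subgroup.le_normalizer_iff_commutator_le_right.mp hKL)).trans
      (inf_le_map_solRadical _))⟩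
end

section
/- Let r be a prime and let A be a finite elementary abelian r-group (an abelian group in which every element a satisfies a^r = 1) acting by automorphisms on the finite group K, with the orders of A and K coprime. Suppose K is A-quasisimple. Then for every a ∈ A, the subgroup [K,a] generated by all elements k⁻¹·a(k) with k ∈ K is either the trivial subgroup or all of K. -/
open Pointwise

/-! `[K, a]` is normal, and `A`-invariant because `A` is abelian, so its image in `K ⧸ Z(K)` is
trivial or everything. In the first case `a` acts trivially modulo the centre, hence fixes every
commutator, hence (as `K` is perfect) all of `K`, so `[K, a] = 1`. In the second case
`[K, a] Z(K) = K`, so `K ⧸ [K, a]` is abelian and `[K, a]` contains `[K, K] = K`. -/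

open scoped commutatorElement

namespace Subgroup

variable {G : Type*} [Group G]

theorem normal_closure_of_conj_mem_closure {s : Set G}
    (h : ∀ g : G, ∀ x ∈ s, g * x * g⁻¹ ∈ closure s) : (closure s).Normal := by
  refine ⟨fun n hn g => ?_⟩
  induction hn using closure_induction with
  | mem x hx => exact h g x hx
  | one => simp
  | mul x y _ _ hx hy => simpa [mul_assoc] using mul_mem hx hy
  | inv x _ hx => simpa [mul_assoc] using inv_mem hx

end Subgroup

section CommutatorWithAut

variable {G : Type*} [Group G]

/-- The subgroup `[G, σ]`. -/
def commutatorWithAut (σ : MulAut G) : Subgroup G :=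
  Subgroup.closure (Set.range fun g => g⁻¹ * σ g)

theorem commutatorWithAut_normal (σ : MulAut G) : (commutatorWithAut σ).Normal := by
  refine Subgroup.normal_closure_of_conj_mem_closure ?_
  rintro g _ ⟨k, rfl⟩
  have hprod : g * (k⁻¹ * σ k) * g⁻¹ =
      ((k * g⁻¹)⁻¹ * σ (k * g⁻¹)) * ((g⁻¹)⁻¹ * σ g⁻¹)⁻¹ := by
    simp only [map_mul, map_inv]
    group
  rw [hprod]
  exact mul_mem (Subgroup.subset_closure ⟨_, rfl⟩) (inv_mem (Subgroup.subset_closure ⟨_, rfl⟩))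

theorem smul_commutatorWithAut_of_commute {σ τ : MulAut G} (h : Commute τ σ) :
    τ • commutatorWithAut σ = commutatorWithAut σ := by
  have hrange : τ '' Set.range (fun g => g⁻¹ * σ g) = Set.range fun g => g⁻¹ * σ g := by
    rw [← Set.range_comp, ← τ.surjective.range_comp (fun g => g⁻¹ * σ g)]
    congr 1
    funext g
    simp only [Function.comp_apply, map_mul, map_inv]
    exact congrArg _ (DFunLike.congr_fun h.eq g)
  change (commutatorWithAut σ).map τ.toMonoidHom = _
  rw [commutatorWithAut, MonoidHom.map_closure]
  exact congrArg Subgroup.closure hrange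

theorem commutatorElement_apply_eq_of_inv_mul_apply_mem_center {σ : MulAut G}
    (hσ : ∀ g, g⁻¹ * σ g ∈ Subgroup.center G) (g h : G) : σ ⁅g, h⁆ = ⁅g, h⁆ := by
  obtain ⟨z, hz, hgz⟩ : ∃ z ∈ Subgroup.center G, σ g = g * z := ⟨_, hσ g, by group⟩
  obtain ⟨w, hw, hhw⟩ : ∃ w ∈ Subgroup.center G, σ h = h * w := ⟨_, hσ h, by group⟩
  have hconj : ∀ c ∈ Subgroup.center G, ∀ x : G, c * x * c⁻¹ = x := fun c hc x => by
    rw [← Subgroup.mem_center_iff.mp hc x, mul_inv_cancel_right]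
  calc σ ⁅g, h⁆ = g * (z * (h * w) * z⁻¹) * g⁻¹ * (h * w)⁻¹ := by
        rw [map_commutatorElement, hgz, hhw, commutatorElement_def]; group
    _ = g * h * (w * g⁻¹ * w⁻¹) * h⁻¹ := by rw [hconj z hz]; group
    _ = ⁅g, h⁆ := by rw [hconj w hw, commutatorElement_def]

theorem commutatorWithAut_eq_bot_of_le_center (hG : commutator G = ⊤) {σ : MulAut G}
    (hσ : commutatorWithAut σ ≤ Subgroup.center G) : commutatorWithAut σ = ⊥ := by
  have hcen : ∀ g, g⁻¹ * σ g ∈ Subgroup.center G := fun g =>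
    hσ (Subgroup.subset_closure ⟨g, rfl⟩)
  have hfix : commutator G ≤ MonoidHom.eqLocus σ.toMonoidHom (MonoidHom.id G) := by
    rw [commutator_def, Subgroup.commutator_le]
    exact fun x _ y _ => commutatorElement_apply_eq_of_inv_mul_apply_mem_center hcen x y
  rw [hG] at hfix
  rw [eq_bot_iff, commutatorWithAut, Subgroup.closure_le]
  rintro _ ⟨g, rfl⟩
  exact inv_mul_eq_one.mpr (hfix (Subgroup.mem_top g)).symm

end CommutatorWithAut

theorem centerQuotHom_smul_map_mk' {G : Type*} [Group G] (σ : MulAut G) (H : Subgroup G) :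
    centerQuotHom G σ • H.map (QuotientGroup.mk' (Subgroup.center G)) =
      (σ • H).map (QuotientGroup.mk' (Subgroup.center G)) := by
  change (H.map _).map (centerQuotHom G σ).toMonoidHom = (H.map σ.toMonoidHom).map _
  rw [Subgroup.map_map, Subgroup.map_map]
  rfl

theorem IsAQuasisimple.le_center_or_eq_top {A G : Type*} [Group A] [Group G]
    {φ : A →* MulAut G} (hφ : IsAQuasisimple φ) {N : Subgroup G} [hN : N.Normal]
    (hinv : ∀ a, φ a • N = N) : N ≤ Subgroup.center G ∨ N = ⊤ := by
  have hmapinv : ∀ a, (centerQuotHom G).comp φ a • N.map (QuotientGroup.mk' _) =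
      N.map (QuotientGroup.mk' _) := fun a => by
    rw [MonoidHom.comp_apply, centerQuotHom_smul_map_mk', hinv]
  rcases hφ.2.2 _ (hN.map _ (QuotientGroup.mk'_surjective _)) hmapinv with hbot | htop
  · left
    rwa [Subgroup.map_eq_bot_iff, QuotientGroup.ker_mk'] at hbot
  · right
    have hsup : N ⊔ Subgroup.center G = ⊤ := by
      simpa [Subgroup.comap_map_eq] using congrArg (Subgroup.comap (QuotientGroup.mk' _)) htop
    exact top_le_iff.mp (hφ.1 ▸ hN.commutator_le_of_self_sup_commutative_eq_top hsup inferInstance)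

theorem commutator_with_automorphism_of_aQuasisimple_eq_bot_or_top_general
    {A K : Type*} [CommGroup A] [Group K]
    (φ : A →* MulAut K)
    (hqs : IsAQuasisimple φ) (a : A) :
    Subgroup.closure {x : K | ∃ k : K, x = k⁻¹ * φ a k} = ⊥ ∨
      Subgroup.closure {x : K | ∃ k : K, x = k⁻¹ * φ a k} = ⊤ := by
  have hset : {x : K | ∃ k : K, x = k⁻¹ * φ a k} = Set.range fun k => k⁻¹ * φ a k := by
    ext; simp [eq_comm]
  rw [hset, ← commutatorWithAut]
  have hnormal := commutatorWithAut_normal (φ a)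
  have hinv : ∀ b, φ b • commutatorWithAut (φ a) = commutatorWithAut (φ a) := fun b =>
    smul_commutatorWithAut_of_commute ((Commute.all b a).map φ)
  exact (hqs.le_center_or_eq_top hinv).imp_left (commutatorWithAut_eq_bot_of_le_center hqs.1)

/-- Let `r` be a prime and `A` a finite elementary abelian `r`-group
acting coprimely by automorphisms on the finite group `K`.  If `K` is
`A`-quasisimple then, for every `a ∈ A`, the subgroup `[K,a]` generated by the
elements `k⁻¹ · a(k)` is trivial or all of `K`. -/
theorem commutator_with_automorphism_of_aQuasisimple_eq_bot_or_top
    {r : ℕ} (hr : r.Prime) {A K : Type*} [CommGroup A] [Finite A] [Group K] [Finite K]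
    (hA : ∀ a : A, a ^ r = 1) (φ : A →* MulAut K)
    (hcop : (Nat.card A).Coprime (Nat.card K))
    (hqs : IsAQuasisimple φ) (a : A) :
    Subgroup.closure {x : K | ∃ k : K, x = k⁻¹ * φ a k} = ⊥ ∨
      Subgroup.closure {x : K | ∃ k : K, x = k⁻¹ * φ a k} = ⊤ :=
  commutator_with_automorphism_of_aQuasisimple_eq_bot_or_top_general φ hqs a
end
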